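/- Let Γ be a preGarside trickle graph and let N be a submonoid of Tr⁺(Γ). Then N is a parabolic submonoid of Tr⁺(Γ) if and only if there exists a parabolic subgraph Γ₁ of Γ such that N is the image of Tr⁺(Γ₁) under the canonical (injective) homomorphism Tr⁺(Γ₁) → Tr⁺(Γ), i.e. N is the submonoid generated by V(Γ₁). -/

import Mathlib

/-!
The relations `φ_a(b) · a = φ_b(a) · b` of `Tr⁺(Γ)` are exactly the relations
`x · c(x, y) = y · c(y, x)` of a complemented presentation with complement
`c(x, y) = φ_x⁻¹(y)`; read backwards, they are those of the complement `c(x, y) = φ_x(y)`.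
Conditions (b) and (g) give both complements the cube condition, so word reversing is complete:
`x · u ≡ y · v` forces either `x = y` and `u ≡ v`, or `x, y` adjacent and `u, v` starting with
`c(x, y)`, `c(y, x)`. A parabolic subgraph is closed under both complements, so reversing two
words over it stays over it: the submonoid it generates is special, and contains a common
multiple of any two of its elements that have one, hence their lcm. Conversely, a special
submonoid is generated by the vertices it contains, and since `φ_x(y) · x = x · y` for `y < x`,
when it contains `x` it contains `y` iff it contains `φ_x(y)`: these vertices form a parabolic
subgraph.
-/
open scoped Classical

universe u

namespace SimpleGraph

/-- `y` belongs to the star of `x` in `G` (i.e. `y = x` or `y` is a neighbour of `x`). -/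
def InStar {V : Type u} (G : SimpleGraph V) (x y : V) : Prop := y = x ∨ G.Adj x y

end SimpleGraph

/-- A **trickle graph**: a simplicial graph together with a partial order on the vertices,
a vertex labeling `mu` with values in `ℕ≥2 ∪ {∞}`, and, for every vertex `x`, an automorphism
`phi x` of the star of `x` (encoded as a permutation of the whole vertex set fixing every
vertex outside of the star of `x`), subject to conditions (a)–(g) of Bellingeri–Chemin–Paris. -/
structure TrickleGraph (V : Type u) [PartialOrder V] where
  /-- the underlying simplicial graph -/
  graph : SimpleGraph V
  /-- the vertex labeling, with `⊤` playing the role of `∞` -/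
  mu : V → ℕ∞
  /-- the automorphism of the star of each vertex, extended by the identity -/
  phi : V → Equiv.Perm V
  two_le_mu : ∀ x : V, 2 ≤ mu x
  /-- condition (a) -/
  adj_of_lt : ∀ x y : V, x < y → graph.Adj x y
  /-- `phi x` is supported on the star of `x` -/
  phi_apply_of_not_inStar : ∀ x y : V, ¬ graph.InStar x y → phi x y = y
  /-- `phi x` maps the star of `x` to itself -/
  inStar_phi : ∀ x y : V, graph.InStar x y → graph.InStar x (phi x y)
  /-- `phi x` is a graph automorphism of the (full subgraph spanned by the) star of `x` -/
  adj_phi_iff : ∀ x y z : V, graph.InStar x y → graph.InStar x z →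
      (graph.Adj (phi x y) (phi x z) ↔ graph.Adj y z)
  /-- condition (b) -/
  adj_incomp : ∀ x y z : V, graph.Adj x y → ¬ x ≤ y → ¬ y ≤ x → z ≤ y →
      graph.Adj x z ∧ ¬ x ≤ z ∧ ¬ z ≤ x
  /-- condition (c) -/
  le_phi_iff : ∀ x y z : V, graph.InStar x y → graph.InStar x z →
      (phi x z ≤ phi x y ↔ z ≤ y)
  /-- condition (d) -/
  lt_of_phi_ne : ∀ x y : V, graph.InStar x y → phi x y ≠ y → y < x
  /-- condition (e): if `mu x` is finite then the order of `phi x` divides `mu x` -/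
  phi_pow_mu : ∀ x : V, phi x ^ WithTop.untopD 0 (mu x) = 1
  /-- condition (f) -/
  mu_phi : ∀ x y : V, graph.InStar x y → mu (phi x y) = mu y
  /-- condition (g) -/
  phi_phi : ∀ x y z : V, z < y → y < x →
      phi x (phi y z) = phi (phi x y) (phi x z)

namespace TrickleGraph

variable {V : Type u} [PartialOrder V]

/-- The set of defining relators of the trickle group: `x ^ (mu x)` whenever `mu x ≠ ∞`, and
`phi_x(y) · x · (phi_y(x) · y)⁻¹` for every edge `{x, y}`. -/
def rels (T : TrickleGraph V) : Set (FreeGroup V) :=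
  {r | ∃ (x : V) (n : ℕ), T.mu x = (n : ℕ∞) ∧ r = FreeGroup.of x ^ n} ∪
  {r | ∃ x y : V, T.graph.Adj x y ∧
      r = FreeGroup.of (T.phi x y) * FreeGroup.of x *
          (FreeGroup.of (T.phi y x) * FreeGroup.of y)⁻¹}

end TrickleGraph

/-- The **trickle group** of a trickle graph. -/
abbrev TrickleGroup {V : Type u} [PartialOrder V] (T : TrickleGraph V) : Type u :=
  PresentedGroup T.rels

namespace TrickleGraph

variable {V : Type u} [PartialOrder V]

/-- The image of a vertex in the trickle group. -/
def gen (T : TrickleGraph V) (x : V) : TrickleGroup T := PresentedGroup.of x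

/-- `mu` converted to a natural number, with `∞` mapped to `0` (so that `ZMod (T.muNat x)`
is the group `ℤ_{mu x}` of the paper, `ZMod 0 = ℤ` corresponding to `mu x = ∞`). -/
def muNat (T : TrickleGraph V) (x : V) : ℕ := WithTop.untopD 0 (T.mu x)

/-- The power `phi_x^a` for an exponent `a ∈ ℤ_{mu x}`; it is well defined on representatives
by condition (e). -/
def phiPow (T : TrickleGraph V) (x : V) (a : ZMod (T.muNat x)) : Equiv.Perm V :=
  T.phi x ^ (ZMod.cast a : ℤ)

theorem mu_phi_apply (T : TrickleGraph V) (x y : V) : T.mu (T.phi x y) = T.mu y := by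
  by_cases h : T.graph.InStar x y
  · exact T.mu_phi x y h
  · rw [T.phi_apply_of_not_inStar x y h]

theorem mu_phi_zpow (T : TrickleGraph V) (x : V) :
    ∀ (n : ℤ) (y : V), T.mu ((T.phi x ^ n) y) = T.mu y := by
  have hinv : ∀ y : V, T.mu ((T.phi x)⁻¹ y) = T.mu y := by
    intro y
    conv_rhs => rw [← Equiv.apply_symm_apply (T.phi x) y]
    exact (T.mu_phi_apply x ((T.phi x)⁻¹ y)).symm
  intro n
  induction n using Int.induction_on with
  | zero => intro y; simp
  | succ k ih =>
      intro y
      have h : (T.phi x ^ ((k : ℤ) + 1)) y = (T.phi x ^ (k : ℤ)) (T.phi x y) := by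
        rw [zpow_add_one]; rfl
      rw [h, ih (T.phi x y), T.mu_phi_apply]
  | pred k ih =>
      intro y
      have h : (T.phi x ^ (-(k : ℤ) - 1)) y = (T.phi x ^ (-(k : ℤ))) ((T.phi x)⁻¹ y) := by
        rw [zpow_sub_one]; rfl
      rw [h, ih ((T.phi x)⁻¹ y), hinv]

theorem mu_phiPow (T : TrickleGraph V) (x : V) (a : ZMod (T.muNat x)) (y : V) :
    T.mu ((T.phiPow x a) y) = T.mu y :=
  T.mu_phi_zpow x _ y

theorem muNat_phiPow (T : TrickleGraph V) (x : V) (a : ZMod (T.muNat x)) (y : V) :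
    T.muNat ((T.phiPow x a) y) = T.muNat y :=
  congrArg (fun m : ℕ∞ => WithTop.untopD 0 m) (T.mu_phiPow x a y)

end TrickleGraph

/-- Transport of a `ZMod` element along an equality of moduli. -/
def zmodCongr {m k : ℕ} (h : m = k) (a : ZMod m) : ZMod k := by subst h; exact a

theorem zmodCongr_ne_zero {m k : ℕ} (h : m = k) {a : ZMod m} (ha : a ≠ 0) :
    zmodCongr h a ≠ 0 := by subst h; exact ha

/-- A **syllable** `x^a`, where `x` is a vertex and `a ∈ ℤ_{mu x} \ {0}`. -/
def Syllable {V : Type u} [PartialOrder V] (T : TrickleGraph V) : Type u :=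
  Σ x : V, {a : ZMod (T.muNat x) // a ≠ 0}

namespace Syllable

variable {V : Type u} [PartialOrder V] {T : TrickleGraph V}

/-- The element of the trickle group represented by a syllable. -/
def elm (s : Syllable T) : TrickleGroup T :=
  (PresentedGroup.of s.1 : TrickleGroup T) ^ (ZMod.cast s.2.val : ℤ)

end Syllable

/-- Syllabic words. -/
abbrev SylWord {V : Type u} [PartialOrder V] (T : TrickleGraph V) := List (Syllable T)

/-- The element of the trickle group represented by a syllabic word. -/
def SylWord.eval {V : Type u} [PartialOrder V] {T : TrickleGraph V} (w : SylWord T) :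
    TrickleGroup T :=
  (w.map Syllable.elm).prod

/-- The defining relations of the **preGarside trickle monoid** `Tr⁺(Γ)`:
`phi_x(y) · x = phi_y(x) · y` for every edge `{x, y}`. -/
def TrickleGraph.monRels {V : Type u} [PartialOrder V] (T : TrickleGraph V) :
    FreeMonoid V → FreeMonoid V → Prop := fun u v =>
  ∃ x y : V, T.graph.Adj x y ∧
    u = FreeMonoid.of (T.phi x y) * FreeMonoid.of x ∧
    v = FreeMonoid.of (T.phi y x) * FreeMonoid.of y

/-- The **preGarside trickle monoid** `Tr⁺(Γ)` of a (preGarside) trickle graph. -/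
abbrev TrickleMonoid {V : Type u} [PartialOrder V] (T : TrickleGraph V) : Type u :=
  PresentedMonoid T.monRels

section PreGarside

variable {M : Type*} [Monoid M]

/-- Left divisibility: `a ≤_L b` iff `a c = b` for some `c`. -/
def DvdL (a b : M) : Prop := ∃ c, a * c = b

/-- Right divisibility: `a ≤_R b` iff `c a = b` for some `c`. -/
def DvdR (a b : M) : Prop := ∃ c, c * a = b

/-- `m` is the least common upper bound of `a` and `b` for left divisibility. -/
def IsLcmL (a b m : M) : Prop :=
  (DvdL a m ∧ DvdL b m) ∧ ∀ c, DvdL a c → DvdL b c → DvdL m c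

/-- `m` is the least common upper bound of `a` and `b` for right divisibility. -/
def IsLcmR (a b m : M) : Prop :=
  (DvdR a m ∧ DvdR b m) ∧ ∀ c, DvdR a c → DvdR b c → DvdR m c

/-- A **preGarside monoid**: a cancellative atomic monoid in which any two elements admitting a
common upper bound for left (resp. right) divisibility admit a least one. -/
def IsPreGarsideMonoid (M : Type*) [Monoid M] : Prop :=
  (∀ a b c d : M, c * a * d = c * b * d → a = b) ∧
  (∃ ν : M → ℕ, (∀ a : M, ν a = 0 ↔ a = 1) ∧ ∀ a b : M, ν a + ν b ≤ ν (a * b)) ∧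
  (∀ a b : M, (∃ c, DvdL a c ∧ DvdL b c) → ∃ m, IsLcmL a b m) ∧
  (∀ a b : M, (∃ c, DvdR a c ∧ DvdR b c) → ∃ m, IsLcmR a b m)

/-- A **Garside element**: a balanced element whose set of divisors generates the monoid. -/
def IsGarsideElement (Δ : M) : Prop :=
  {a : M | DvdL a Δ} = {a : M | DvdR a Δ} ∧ Submonoid.closure {a : M | DvdL a Δ} = ⊤

/-- A **Garside monoid**: a preGarside monoid containing a Garside element. -/
def IsGarsideMonoid (M : Type*) [Monoid M] : Prop :=
  IsPreGarsideMonoid M ∧ ∃ Δ : M, IsGarsideElement Δ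

/-- A **special** submonoid: closed under taking factors. -/
def Submonoid.IsSpecial (N : Submonoid M) : Prop := ∀ a b : M, a * b ∈ N → a ∈ N ∧ b ∈ N

/-- A **parabolic submonoid** of a (preGarside) monoid: a special submonoid closed under the
least common upper bounds `∨_L` and `∨_R` whenever they exist. -/
def Submonoid.IsParabolic (N : Submonoid M) : Prop :=
  N.IsSpecial ∧
  (∀ a b m : M, a ∈ N → b ∈ N → IsLcmL a b m → m ∈ N) ∧
  (∀ a b m : M, a ∈ N → b ∈ N → IsLcmR a b m → m ∈ N)

end PreGarside

/-- Relators defining the **enveloping group** of a monoid `M`: the enveloping group is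
generated by the elements of `M` subject to the relations `of (a b) = of a · of b`. -/
def envRels (M : Type u) [Monoid M] : Set (FreeGroup M) :=
  {r | ∃ a b : M, r = FreeGroup.of (a * b) * (FreeGroup.of a * FreeGroup.of b)⁻¹}

/-- The **enveloping group** `G(M)` of a monoid `M`. -/
abbrev EnvGroup (M : Type u) [Monoid M] : Type u := PresentedGroup (envRels M)

/-- The natural map `M → G(M)`. -/
def envOf (M : Type u) [Monoid M] (a : M) : EnvGroup M := PresentedGroup.of a

/-- A **parabolic subgraph** of a trickle graph, given by its vertex set `X`: a full subgraph
such that for every `x ∈ X` the automorphism `φ_x` stabilizes the star of `x` in the subgraph. -/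
def TrickleGraph.IsParabolicSet {V : Type u} [PartialOrder V] (T : TrickleGraph V)
    (X : Set V) : Prop :=
  ∀ x ∈ X, (T.phi x) '' {y | y ∈ X ∧ T.graph.InStar x y} = {y | y ∈ X ∧ T.graph.InStar x y}

namespace Complemented

open Relation

variable {A : Type*}

def Rewrite (r : List A → List A → Prop) (u v : List A) : Prop :=
  ∃ p q u' v', r u' v' ∧ u = p ++ u' ++ q ∧ v = p ++ v' ++ q

section Rewrite

variable {r : List A → List A → Prop}

theorem Rewrite.of_rel {u v : List A} (h : r u v) : Rewrite r u v :=
  ⟨[], [], u, v, h, by simp, by simp⟩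

theorem Rewrite.symm (hr : ∀ u v, r u v → r v u) {u v : List A} (h : Rewrite r u v) :
    Rewrite r v u := by
  obtain ⟨p, q, u', v', h, rfl, rfl⟩ := h
  exact ⟨p, q, v', u', hr _ _ h, rfl, rfl⟩

theorem Rewrite.append {u v : List A} (h : Rewrite r u v) (p q : List A) :
    Rewrite r (p ++ u ++ q) (p ++ v ++ q) := by
  obtain ⟨p', q', u', v', h, rfl, rfl⟩ := h
  exact ⟨p ++ p', q' ++ q, u', v', h, by simp, by simp⟩

theorem Rewrite.reverse {r' : List A → List A → Prop}
    (hr : ∀ u v, r u v → r' u.reverse v.reverse) {u v : List A} (h : Rewrite r u v) :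
    Rewrite r' u.reverse v.reverse := by
  obtain ⟨p, q, u', v', h, rfl, rfl⟩ := h
  exact ⟨q.reverse, p.reverse, u'.reverse, v'.reverse, hr _ _ h, by simp, by simp⟩

theorem Rewrite.forall_mem {P : A → Prop}
    (hr : ∀ u v, r u v → (∀ a ∈ u, P a) → ∀ a ∈ v, P a) {u v : List A} (h : Rewrite r u v)
    (hu : ∀ a ∈ u, P a) : ∀ a ∈ v, P a := by
  obtain ⟨p, q, u', v', h, rfl, rfl⟩ := h
  simp only [List.mem_append] at hu ⊢
  have hv' := hr _ _ h fun a ha => hu a (.inl (.inr ha))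
  rintro a ((ha | ha) | ha)
  exacts [hu a (.inl (.inl ha)), hv' a ha, hu a (.inr ha)]

theorem reflTransGen_rewrite_symm (hr : ∀ u v, r u v → r v u) {u v : List A}
    (h : ReflTransGen (Rewrite r) u v) : ReflTransGen (Rewrite r) v u := by
  induction h with
  | refl => rfl
  | tail _ hstep ih => exact ih.head (hstep.symm hr)

theorem reflTransGen_rewrite_append {u v : List A} (h : ReflTransGen (Rewrite r) u v)
    (p q : List A) : ReflTransGen (Rewrite r) (p ++ u ++ q) (p ++ v ++ q) :=
  h.lift (fun w => p ++ w ++ q) fun _ _ hstep => hstep.append p q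

theorem reflTransGen_rewrite_mul {u u' v v' : List A} (hu : ReflTransGen (Rewrite r) u u')
    (hv : ReflTransGen (Rewrite r) v v') : ReflTransGen (Rewrite r) (u ++ v) (u' ++ v') := by
  have h₁ := reflTransGen_rewrite_append hu [] v
  have h₂ := reflTransGen_rewrite_append hv u' []
  simp only [List.nil_append, List.append_nil] at h₁ h₂
  exact h₁.trans h₂

theorem conGen_iff_reflTransGen_rewrite (hr : ∀ u v, r u v → r v u) {u v : List A} :
    conGen (fun a b => r a.toList b.toList) (FreeMonoid.ofList u) (FreeMonoid.ofList v) ↔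
      ReflTransGen (Rewrite r) u v := by
  constructor
  · suffices ∀ a b : FreeMonoid A, conGen (fun a b => r a.toList b.toList) a b →
        ReflTransGen (Rewrite r) a.toList b.toList from this _ _
    intro a b h
    induction h with
    | of _ _ h => exact .single (.of_rel h)
    | refl => rfl
    | symm _ ih => exact reflTransGen_rewrite_symm hr ih
    | trans _ _ ih₁ ih₂ => exact ih₁.trans ih₂
    | mul _ _ ih₁ ih₂ => exact reflTransGen_rewrite_mul ih₁ ih₂
  · intro h
    induction h with
    | refl => exact (conGen _).refl _
    | tail _ hstep ih =>
      obtain ⟨p, q, u', v', h, rfl, rfl⟩ := hstep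
      exact ih.trans ((conGen _).mul ((conGen _).mul ((conGen _).refl _) (ConGen.Rel.of _ _ h))
        ((conGen _).refl _))

end Rewrite

variable (G : SimpleGraph A) (c : A → A → A)

/-- The pairs of words `x · c x y` and `y · c y x`, the defining relations of the monoid
complemented by `c`. -/
def RelPair (u v : List A) : Prop :=
  ∃ x y, G.Adj x y ∧ u = [x, c x y] ∧ v = [y, c y x]

abbrev WordEquiv : List A → List A → Prop := ReflTransGen (Rewrite (RelPair G c))

/-- The cube condition, which makes the presentation complete for word reversing. -/
structure Coherent : Prop where
  injective (x : A) : Function.Injective (c x)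
  adj_iff {x y z : A} : G.Adj x y → G.Adj x z → (G.Adj (c x y) (c x z) ↔ G.Adj y z)
  cube {x y : A} (z : A) : G.Adj x y → c (c x y) (c x z) = c (c y x) (c y z)

variable {G c}

theorem relPair_symm {u v : List A} (h : RelPair G c u v) : RelPair G c v u := by
  obtain ⟨x, y, hxy, rfl, rfl⟩ := h
  exact ⟨y, x, hxy.symm, rfl, rfl⟩

namespace WordEquiv

theorem symm {u v : List A} (h : WordEquiv G c u v) : WordEquiv G c v u :=
  reflTransGen_rewrite_symm (fun _ _ => relPair_symm) h

theorem append {u u' v v' : List A} (hu : WordEquiv G c u u') (hv : WordEquiv G c v v') :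
    WordEquiv G c (u ++ v) (u' ++ v') :=
  reflTransGen_rewrite_mul hu hv

theorem cons {u v : List A} (x : A) (h : WordEquiv G c u v) : WordEquiv G c (x :: u) (x :: v) :=
  append (u := [x]) .refl h

theorem rel {x y : A} (hxy : G.Adj x y) (w : List A) :
    WordEquiv G c (x :: c x y :: w) (y :: c y x :: w) :=
  .single (by simpa using Rewrite.append (r := RelPair G c) (.of_rel ⟨x, y, hxy, rfl, rfl⟩) [] w)

end WordEquiv

theorem Rewrite.length_eq {u v : List A} (h : Rewrite (RelPair G c) u v) :
    u.length = v.length := by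
  obtain ⟨p, q, _, _, ⟨x, y, -, rfl, rfl⟩, rfl, rfl⟩ := h
  simp

theorem Rewrite.cons_cases {x : A} {u w : List A} (h : Rewrite (RelPair G c) (x :: u) w) :
    (∃ u', w = x :: u' ∧ Rewrite (RelPair G c) u u') ∨
      ∃ y q, G.Adj x y ∧ u = c x y :: q ∧ w = y :: c y x :: q := by
  obtain ⟨p, q, _, _, ⟨a, b, hab, rfl, rfl⟩, hu, rfl⟩ := h
  cases p with
  | nil =>
    obtain ⟨rfl, rfl⟩ : x = a ∧ u = c a b :: q := by simpa using hu
    exact .inr ⟨b, q, hab, rfl, rfl⟩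
  | cons z p =>
    obtain ⟨rfl, rfl⟩ : x = z ∧ u = p ++ a :: c a b :: q := by simpa using hu
    exact .inl ⟨_, rfl, p, q, _, _, ⟨a, b, hab, rfl, rfl⟩, by simp, rfl⟩

variable (G c) in
/-- The possible shapes of an equivalence `x :: u ≡ y :: v`. -/
def SplitsAtHead (x : A) (u : List A) (y : A) (v : List A) : Prop :=
  x = y ∧ WordEquiv G c u v ∨
    G.Adj x y ∧ ∃ w, WordEquiv G c u (c x y :: w) ∧ WordEquiv G c v (c y x :: w)

theorem SplitsAtHead.of_rewrite {x y : A} {u u' v : List A}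
    (hu : Rewrite (RelPair G c) u u') (h : SplitsAtHead G c x u' y v) :
    SplitsAtHead G c x u y v := by
  rcases h with ⟨rfl, h⟩ | ⟨hxy, w, h, hv⟩
  exacts [.inl ⟨rfl, h.head hu⟩, .inr ⟨hxy, w, h.head hu, hv⟩]

/-- The induction step of completeness: the cube condition on `x, b, y` absorbs a relation
applied at the head. -/
theorem SplitsAtHead.of_rel (hc : Coherent G c) {x b y : A} {q v : List A} (hxb : G.Adj x b)
    (ih : ∀ z z' w, WordEquiv G c (z :: q) (z' :: w) → SplitsAtHead G c z q z' w)
    (h : SplitsAtHead G c b (c b x :: q) y v) : SplitsAtHead G c x (c x b :: q) y v := by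
  rcases h with ⟨rfl, hv⟩ | ⟨hby, w, hq, hv⟩
  · exact .inr ⟨hxb, q, .refl, hv.symm⟩
  rcases ih _ _ _ hq with ⟨hcc, hqw⟩ | ⟨hadj, w', hq', hw'⟩
  · obtain rfl := hc.injective b hcc
    exact .inl ⟨rfl, (hqw.cons _).trans hv.symm⟩
  have hxy : G.Adj x y := (hc.adj_iff hxb.symm hby).1 hadj
  refine .inr ⟨hxy, c (c x y) (c x b) :: w', ?_, ?_⟩
  · have hq'' : WordEquiv G c (c x b :: q) (c x b :: c (c x b) (c x y) :: w') := by
      rw [hc.cube y hxb]; exact hq'.cons _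
    exact hq''.trans (WordEquiv.rel ((hc.adj_iff hxb hxy).2 hby) w')
  · have hv' : WordEquiv G c v (c y b :: c (c y b) (c y x) :: w') := by
      rw [hc.cube x hby.symm]; exact hv.trans (hw'.cons _)
    rw [hc.cube b hxy]
    exact hv'.trans (WordEquiv.rel ((hc.adj_iff hby.symm hxy.symm).2 hxb.symm) w')

theorem splitsAtHead_of_wordEquiv (hc : Coherent G c) {x y : A} {u v : List A}
    (h : WordEquiv G c (x :: u) (y :: v)) : SplitsAtHead G c x u y v := by
  induction hn : u.length using Nat.strong_induction_on generalizing x y u v with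
  | _ n ih =>
  generalize hw : x :: u = w at h
  induction h using ReflTransGen.head_induction_on generalizing x u with
  | refl =>
    obtain ⟨rfl, rfl⟩ := List.cons.inj hw
    exact .inl ⟨rfl, .refl⟩
  | head hstep _ ihw =>
    subst hw
    rcases hstep.cons_cases with ⟨u', rfl, hu⟩ | ⟨b, q, hxb, rfl, rfl⟩
    · exact (ihw (hu.length_eq ▸ hn) rfl).of_rewrite hu
    · refine .of_rel hc hxb (fun z z' w h => ih q.length ?_ h rfl) (ihw ?_ rfl) <;>
        simp [← hn]

theorem Coherent.cancel_left (hc : Coherent G c) {x : A} {u v : List A}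
    (h : WordEquiv G c (x :: u) (x :: v)) : WordEquiv G c u v := by
  rcases splitsAtHead_of_wordEquiv hc h with ⟨-, h⟩ | ⟨hxx, -⟩
  exacts [h, (hxx.ne rfl).elim]

variable (G c) in
def IsLcmCompletion (u v u₁ v₁ : List A) : Prop :=
  WordEquiv G c (u ++ u₁) (v ++ v₁) ∧
    ∀ s t, WordEquiv G c (u ++ s) (v ++ t) →
      ∃ r, WordEquiv G c s (u₁ ++ r) ∧ WordEquiv G c t (v₁ ++ r)

theorem isLcmCompletion_nil (v : List A) : IsLcmCompletion G c [] v v [] :=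
  ⟨by simpa using .refl, fun _ t h => ⟨t, h, .refl⟩⟩

theorem IsLcmCompletion.symm {u v u₁ v₁ : List A} (h : IsLcmCompletion G c u v u₁ v₁) :
    IsLcmCompletion G c v u v₁ u₁ :=
  ⟨h.1.symm, fun s t hst => (h.2 t s hst.symm).imp fun _ hr => hr.symm⟩

theorem IsLcmCompletion.cons (hc : Coherent G c) (x : A) {u v u₁ v₁ : List A}
    (h : IsLcmCompletion G c u v u₁ v₁) : IsLcmCompletion G c (x :: u) (x :: v) u₁ v₁ :=
  ⟨h.1.cons x, fun s t hst => h.2 s t (hc.cancel_left hst)⟩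

theorem IsLcmCompletion.cons_of_adj (hc : Coherent G c) {x y : A} (hxy : G.Adj x y)
    {u v α β γ δ : List A} (h₁ : IsLcmCompletion G c u [c x y] α β)
    (h₂ : IsLcmCompletion G c v (c y x :: β) γ δ) :
    IsLcmCompletion G c (x :: u) (y :: v) (α ++ δ) γ := by
  refine ⟨?_, fun s t hst => ?_⟩
  · have hu : WordEquiv G c (x :: (u ++ (α ++ δ))) (x :: c x y :: (β ++ δ)) := by
      simpa using (h₁.1.append (.refl (a := δ))).cons x
    have hv : WordEquiv G c (y :: c y x :: (β ++ δ)) (y :: (v ++ γ)) := by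
      simpa using (h₂.1.symm).cons y
    exact hu.trans ((WordEquiv.rel hxy _).trans hv)
  · rcases splitsAtHead_of_wordEquiv hc hst with ⟨rfl, -⟩ | ⟨-, w, hs, ht⟩
    · exact (hxy.ne rfl).elim
    obtain ⟨r, hsr, hwr⟩ := h₁.2 s w hs
    obtain ⟨r', htr, hrr⟩ := h₂.2 t r (ht.trans (hwr.cons _))
    exact ⟨r', by simpa using hsr.trans (WordEquiv.append .refl hrr), htr⟩

/-- The length bounds, which hold because the complement of two letters is a single letter,
are what make the induction on `u.length + v.length` go through. -/
theorem exists_isLcmCompletion (hc : Coherent G c) {X : Set A}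
    (hX : ∀ x y, G.Adj x y → x ∈ X → y ∈ X → c x y ∈ X) {u v : List A}
    (hu : ∀ a ∈ u, a ∈ X) (hv : ∀ a ∈ v, a ∈ X) (huv : ∃ s t, WordEquiv G c (u ++ s) (v ++ t)) :
    ∃ u₁ v₁, (∀ a ∈ u₁, a ∈ X) ∧ (∀ a ∈ v₁, a ∈ X) ∧ u₁.length ≤ v.length ∧
      v₁.length ≤ u.length ∧ IsLcmCompletion G c u v u₁ v₁ := by
  induction hn : u.length + v.length using Nat.strong_induction_on generalizing u v with
  | _ n ih =>
  match u, v, huv with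
  | [], v, _ => exact ⟨v, [], hv, by simp, le_rfl, by simp, isLcmCompletion_nil v⟩
  | u, [], _ => exact ⟨[], u, by simp, hu, by simp, le_rfl, (isLcmCompletion_nil u).symm⟩
  | x :: u, y :: v, ⟨s, t, hst⟩ =>
    simp only [List.mem_cons, forall_eq_or_imp, List.length_cons] at hu hv hn
    rcases splitsAtHead_of_wordEquiv hc hst with ⟨rfl, hst'⟩ | ⟨hxy, w, hs, ht⟩
    · obtain ⟨u₁, v₁, hu₁, hv₁, hlu, hlv, h⟩ :=
        ih _ (by omega) (u := u) (v := v) hu.2 hv.2 ⟨s, t, hst'⟩ rfl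
      exact ⟨u₁, v₁, hu₁, hv₁, by simp; omega, by simp; omega, h.cons hc x⟩
    obtain ⟨α, β, hα, hβ, hlα, hlβ, h₁⟩ :=
      ih (u.length + 1) (by omega) (u := u) (v := [c x y]) hu.2
        (by simpa using hX x y hxy hu.1 hv.1) ⟨s, w, hs⟩ (by simp)
    obtain ⟨r, -, hwr⟩ := h₁.2 s w hs
    obtain ⟨γ, δ, hγ, hδ, hlγ, hlδ, h₂⟩ :=
      ih (v.length + (β.length + 1)) (by omega) (u := v) (v := c y x :: β) hv.2
        (by simpa using ⟨hX y x hxy.symm hv.1 hu.1, hβ⟩) ⟨t, r, ht.trans (hwr.cons _)⟩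
        (by simp)
    refine ⟨α ++ δ, γ, ?_, hγ, ?_, ?_, h₁.cons_of_adj hc hxy h₂⟩
    · simpa using fun a ha => ha.elim (hα a) (hδ a)
    · simp at hlα hlδ ⊢; omega
    · simp at hlγ ⊢; omega

end Complemented

theorem Equiv.Perm.image_eq_self_iff {α : Type*} (e : Equiv.Perm α) (s : Set α) :
    e '' s = s ↔ ∀ y, e y ∈ s ↔ y ∈ s := by
  rw [Equiv.image_eq_preimage_symm, Set.ext_iff]
  refine ⟨fun h y => ?_, fun h y => ?_⟩
  · simpa using (h (e y)).symm
  · simpa using (h (e.symm y)).symm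

namespace TrickleGraph

open Complemented

variable {V : Type u} [PartialOrder V] (T : TrickleGraph V) {a b x y z : V}

theorem inStar_of_lt (h : y < x) : T.graph.InStar x y := .inr (T.adj_of_lt y x h).symm

theorem phi_eq_self_of_not_lt (h : ¬ y < x) : T.phi x y = y := by
  by_cases hy : T.graph.InStar x y
  · exact not_not.1 fun hne => h (T.lt_of_phi_ne x y hy hne)
  · exact T.phi_apply_of_not_inStar x y hy

theorem phi_self (x : V) : T.phi x x = x := T.phi_eq_self_of_not_lt (lt_irrefl x)

theorem phi_phi_inv (x y : V) : T.phi x ((T.phi x)⁻¹ y) = y := (T.phi x).apply_symm_apply y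

theorem inStar_phi_iff : T.graph.InStar x (T.phi x y) ↔ T.graph.InStar x y :=
  ⟨fun h => not_not.1 fun hy => hy (T.phi_apply_of_not_inStar x y hy ▸ h), T.inStar_phi x y⟩

theorem phi_lt_phi_iff (hy : T.graph.InStar x y) (hz : T.graph.InStar x z) :
    T.phi x z < T.phi x y ↔ z < y := by
  simp only [lt_iff_le_not_ge, T.le_phi_iff x y z hy hz, T.le_phi_iff x z y hz hy]

theorem phi_lt (h : y < x) : T.phi x y < x := by
  have := (T.phi_lt_phi_iff (.inl rfl) (T.inStar_of_lt h)).2 h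
  rwa [phi_self] at this

/-- Condition (g), as an identity of permutations. -/
theorem phi_mul_phi_of_lt (h : y < x) : T.phi x * T.phi y = T.phi (T.phi x y) * T.phi x := by
  ext w
  simp only [Equiv.Perm.mul_apply]
  by_cases hwy : w < y
  · exact T.phi_phi x y w hwy h
  rw [T.phi_eq_self_of_not_lt hwy]
  refine (T.phi_eq_self_of_not_lt fun hlt => ?_).symm
  by_cases hwx : w < x
  · exact hwy ((T.phi_lt_phi_iff (T.inStar_of_lt h) (T.inStar_of_lt hwx)).1 hlt)
  · rw [T.phi_eq_self_of_not_lt hwx] at hlt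
    exact hwx (hlt.trans (T.phi_lt h))

/-- By condition (b), each of two incomparable neighbours fixes everything below the other. -/
theorem phi_mul_phi_comm (hxy : T.graph.Adj x y) (h₁ : ¬ x ≤ y) (h₂ : ¬ y ≤ x) :
    T.phi x * T.phi y = T.phi y * T.phi x := by
  have fix : ∀ {a b}, T.graph.Adj a b → ¬ a ≤ b → ¬ b ≤ a → ∀ w ≤ b, T.phi a w = w :=
    fun hab h₁ h₂ w hw =>
      T.phi_eq_self_of_not_lt fun h => (T.adj_incomp _ _ w hab h₁ h₂ hw).2.2 h.le
  ext w
  simp only [Equiv.Perm.mul_apply]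
  by_cases hwy : w < y
  · rw [fix hxy h₁ h₂ w hwy.le, fix hxy h₁ h₂ _ (T.phi_lt hwy).le]
  by_cases hwx : w < x
  · rw [fix hxy.symm h₂ h₁ w hwx.le, fix hxy.symm h₂ h₁ _ (T.phi_lt hwx).le]
  · simp only [T.phi_eq_self_of_not_lt hwy, T.phi_eq_self_of_not_lt hwx]

theorem phi_phi_mul_phi (hxy : T.graph.Adj x y) :
    T.phi (T.phi x y) * T.phi x = T.phi (T.phi y x) * T.phi y := by
  wlog hlt : ¬ x < y generalizing x y
  · exact (this hxy.symm (not_lt_of_gt (not_not.1 hlt))).symm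
  rw [T.phi_eq_self_of_not_lt hlt]
  by_cases hgt : y < x
  · exact (T.phi_mul_phi_of_lt hgt).symm
  rw [T.phi_eq_self_of_not_lt hgt]
  exact (T.phi_mul_phi_comm hxy (fun h => hlt (h.lt_of_ne hxy.ne))
    (fun h => hgt (h.lt_of_ne hxy.ne.symm))).symm

/-- The defining relation `φ_a(b) · a = φ_b(a) · b` of the trickle monoid is also the
relation `x · φ_x⁻¹(y) = y · φ_y⁻¹(x)` for `x = φ_a(b)`, `y = φ_b(a)`. -/
theorem adj_and_phi_eq_iff :
    T.graph.Adj a b ∧ T.phi a b = x ∧ T.phi b a = y ↔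
      T.graph.Adj x y ∧ T.phi x a = y ∧ T.phi y b = x := by
  constructor
  · rintro ⟨hab, rfl, rfl⟩
    wlog hlt : ¬ a < b generalizing a b
    · obtain ⟨h, h₁, h₂⟩ := this hab.symm (not_lt_of_gt (not_not.1 hlt))
      exact ⟨h.symm, h₂, h₁⟩
    have hne : T.phi a b ≠ a := by simpa [phi_self] using (T.phi a).injective.ne hab.ne.symm
    have hfix : ¬ a < T.phi a b := by
      by_cases hba : b < a
      · exact (T.phi_lt hba).not_gt
      · rwa [T.phi_eq_self_of_not_lt hba]
    rw [T.phi_eq_self_of_not_lt hlt, T.phi_eq_self_of_not_lt hfix]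
    exact ⟨((T.inStar_phi a b (.inr hab)).resolve_left hne).symm, rfl, rfl⟩
  · rintro ⟨hxy, hxa, hyb⟩
    wlog hlt : ¬ x < y generalizing a b x y
    · obtain ⟨h, h₁, h₂⟩ := this hxy.symm hyb hxa (not_lt_of_gt (not_not.1 hlt))
      exact ⟨h.symm, h₂, h₁⟩
    obtain rfl : b = x := (T.phi y).injective (hyb.trans (T.phi_eq_self_of_not_lt hlt).symm)
    have hstar : T.graph.InStar b a := T.inStar_phi_iff.1 (hxa ▸ .inr hxy)
    have hne : a ≠ b := by
      rintro rfl
      exact hxy.ne (by rw [← hxa, phi_self])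
    have hfix : ¬ b < a := fun h => hlt (by
      rwa [← hxa, T.phi_eq_self_of_not_lt (lt_asymm h)])
    exact ⟨(hstar.resolve_left hne).symm, T.phi_eq_self_of_not_lt hfix, hxa⟩

variable {X : Set V} {u v : List V}

theorem coherent_phi : Coherent T.graph fun x => T.phi x where
  injective x := (T.phi x).injective
  adj_iff hxy hxz := T.adj_phi_iff _ _ _ (.inr hxy) (.inr hxz)
  cube z hxy := DFunLike.congr_fun (T.phi_phi_mul_phi hxy) z

theorem coherent_phi_inv : Coherent T.graph fun x => ⇑(T.phi x)⁻¹ where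
  injective x := (T.phi x)⁻¹.injective
  adj_iff {x y z} hxy hxz := by
    have hstar : ∀ {w}, T.graph.Adj x w → T.graph.InStar x ((T.phi x)⁻¹ w) := fun hw =>
      T.inStar_phi_iff.1 (by rw [phi_phi_inv]; exact .inr hw)
    simpa using (T.adj_phi_iff x _ _ (hstar hxy) (hstar hxz)).symm
  cube {x y} z hxy := by
    -- the inverse of the cube identity of `φ` at `φ_x⁻¹ y` and `φ_y⁻¹ x`
    obtain ⟨hab, hx, hy⟩ := T.adj_and_phi_eq_iff.2
      ⟨hxy, T.phi_phi_inv x y, T.phi_phi_inv y x⟩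
    have h := T.phi_phi_mul_phi hab
    rw [hx, hy] at h
    simpa only [mul_inv_rev, Equiv.Perm.mul_apply] using DFunLike.congr_fun (congrArg (·⁻¹) h) z

theorem relPair_phi_inv_iff :
    RelPair T.graph (fun x => ⇑(T.phi x)⁻¹) u v ↔
      ∃ a b, T.graph.Adj a b ∧ u = [T.phi a b, a] ∧ v = [T.phi b a, b] := by
  constructor
  · rintro ⟨x, y, hxy, rfl, rfl⟩
    obtain ⟨hab, hx, hy⟩ := T.adj_and_phi_eq_iff.2
      ⟨hxy, T.phi_phi_inv x y, T.phi_phi_inv y x⟩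
    exact ⟨_, _, hab, by rw [hx], by rw [hy]⟩
  · rintro ⟨a, b, hab, rfl, rfl⟩
    obtain ⟨hxy, hx, hy⟩ := T.adj_and_phi_eq_iff.1 ⟨hab, rfl, rfl⟩
    exact ⟨_, _, hxy, by beta_reduce; rw [Equiv.Perm.inv_eq_iff_eq.2 hx.symm],
      by beta_reduce; rw [Equiv.Perm.inv_eq_iff_eq.2 hy.symm]⟩

theorem monRels_eq :
    T.monRels = fun a b => RelPair T.graph (fun x => ⇑(T.phi x)⁻¹) a.toList b.toList := by
  ext a b
  rw [relPair_phi_inv_iff]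
  exact exists₂_congr fun x y => and_congr_right' <|
    and_congr FreeMonoid.toList.apply_eq_iff_eq.symm FreeMonoid.toList.apply_eq_iff_eq.symm

theorem wordEquiv_phi_inv_iff_reverse :
    WordEquiv T.graph (fun x => ⇑(T.phi x)⁻¹) u v ↔
      WordEquiv T.graph (fun x => T.phi x) u.reverse v.reverse := by
  have hrel : ∀ {u v : List V}, RelPair T.graph (fun x => ⇑(T.phi x)⁻¹) u v ↔
      RelPair T.graph (fun x => T.phi x) u.reverse v.reverse := by
    intro u v
    rw [relPair_phi_inv_iff]
    simp [RelPair, List.reverse_eq_iff]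
  refine ⟨fun h => h.lift _ fun _ _ h => h.reverse fun _ _ => hrel.1, fun h => ?_⟩
  have := h.lift List.reverse fun _ _ h => h.reverse fun _ _ h => hrel.2 (by simpa using h)
  simpa only [Function.onFun, List.reverse_reverse] using this

theorem isParabolicSet_iff :
    T.IsParabolicSet X ↔ ∀ x ∈ X, ∀ y, T.phi x y ∈ X ↔ y ∈ X := by
  refine forall₂_congr fun x _ => ?_
  rw [Equiv.Perm.image_eq_self_iff]
  refine ⟨fun h y => ?_, fun h y => and_congr (h y) T.inStar_phi_iff⟩
  by_cases hy : T.graph.InStar x y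
  · simpa [hy, T.inStar_phi_iff] using h y
  · rw [T.phi_apply_of_not_inStar x y hy]

namespace IsParabolicSet

variable {T}

theorem phi_mem (hX : T.IsParabolicSet X) {x y : V} (hx : x ∈ X) (hy : y ∈ X) :
    T.phi x y ∈ X :=
  (T.isParabolicSet_iff.1 hX x hx y).2 hy

theorem phi_inv_mem (hX : T.IsParabolicSet X) {x y : V} (hx : x ∈ X) (hy : y ∈ X) :
    (T.phi x)⁻¹ y ∈ X :=
  (T.isParabolicSet_iff.1 hX x hx _).1 (by simpa using hy)

theorem forall_mem_of_wordEquiv (hX : T.IsParabolicSet X)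
    (h : WordEquiv T.graph (fun x => ⇑(T.phi x)⁻¹) u v) (hu : ∀ a ∈ u, a ∈ X) :
    ∀ a ∈ v, a ∈ X := by
  induction h with
  | refl => exact hu
  | tail _ hstep ih =>
    refine hstep.forall_mem (fun _ _ hr hu' => ?_) ih
    obtain ⟨a, b, -, rfl, rfl⟩ := (relPair_phi_inv_iff T).1 hr
    simp only [List.mem_cons, List.not_mem_nil, or_false, forall_eq_or_imp, forall_eq] at hu' ⊢
    have hb : b ∈ X := (T.isParabolicSet_iff.1 hX a hu'.2 b).1 hu'.1
    exact ⟨hX.phi_mem hb hu'.2, hb⟩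

end IsParabolicSet

end TrickleGraph

namespace Submonoid.IsSpecial

variable {M : Type*} [Monoid M] {N : Submonoid M} {a b d m : M}

theorem mul_mem_iff (hN : N.IsSpecial) : a * b ∈ N ↔ a ∈ N ∧ b ∈ N :=
  ⟨hN a b, fun h => mul_mem h.1 h.2⟩

theorem eq_closure_inter {S : Set M} (hS : closure S = ⊤) (hN : N.IsSpecial) :
    N = closure (S ∩ N) := by
  refine le_antisymm (fun a ha => ?_) (closure_le.2 Set.inter_subset_right)
  induction (hS ▸ mem_top a : a ∈ closure S) using closure_induction with
  | mem a haS => exact subset_closure ⟨haS, ha⟩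
  | one => exact one_mem _
  | mul a b _ _ iha ihb => exact mul_mem (iha (hN a b ha).1) (ihb (hN a b ha).2)

theorem mem_of_isLcmL (hN : N.IsSpecial) (hm : IsLcmL a b m) (had : DvdL a d) (hbd : DvdL b d)
    (hd : d ∈ N) : m ∈ N := by
  obtain ⟨e, rfl⟩ := hm.2 d had hbd
  exact (hN _ _ hd).1

theorem mem_of_isLcmR (hN : N.IsSpecial) (hm : IsLcmR a b m) (had : DvdR a d) (hbd : DvdR b d)
    (hd : d ∈ N) : m ∈ N := by
  obtain ⟨e, rfl⟩ := hm.2 d had hbd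
  exact (hN _ _ hd).2

end Submonoid.IsSpecial

namespace TrickleMonoid

open Complemented Submonoid

variable {V : Type u} [PartialOrder V] (T : TrickleGraph V) {X : Set V}

def ofWord (w : List V) : TrickleMonoid T := PresentedMonoid.mk T.monRels (FreeMonoid.ofList w)

theorem ofWord_append (u v : List V) : ofWord T (u ++ v) = ofWord T u * ofWord T v :=
  map_mul _ _ _

theorem exists_ofWord_eq (a : TrickleMonoid T) : ∃ w, ofWord T w = a :=
  PresentedMonoid.surjective_mk a

theorem ofWord_eq_ofWord_iff {u v : List V} :
    ofWord T u = ofWord T v ↔ WordEquiv T.graph (fun x => ⇑(T.phi x)⁻¹) u v := by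
  rw [ofWord, ofWord, PresentedMonoid.mk_eq_mk_iff, T.monRels_eq]
  exact conGen_iff_reflTransGen_rewrite (r := RelPair T.graph _) fun _ _ => relPair_symm

theorem ofWord_eq_ofWord_iff_reverse {u v : List V} :
    ofWord T u = ofWord T v ↔ WordEquiv T.graph (fun x => T.phi x) u.reverse v.reverse :=
  (ofWord_eq_ofWord_iff T).trans T.wordEquiv_phi_inv_iff_reverse

theorem mem_closure_iff {a : TrickleMonoid T} :
    a ∈ closure (PresentedMonoid.of T.monRels '' X) ↔
      ∃ w, (∀ x ∈ w, x ∈ X) ∧ ofWord T w = a := by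
  constructor
  · intro h
    induction h using closure_induction with
    | mem _ h =>
      obtain ⟨x, hx, rfl⟩ := h
      exact ⟨[x], by simpa using hx, rfl⟩
    | one => exact ⟨[], by simp, map_one _⟩
    | mul _ _ _ _ ih₁ ih₂ =>
      obtain ⟨u, hu, rfl⟩ := ih₁
      obtain ⟨v, hv, rfl⟩ := ih₂
      exact ⟨u ++ v, by simpa [or_imp, forall_and] using ⟨hu, hv⟩, ofWord_append T u v⟩
  · rintro ⟨w, hw, rfl⟩
    induction w with
    | nil => exact one_mem _
    | cons x w ih =>
      rw [← List.singleton_append, ofWord_append]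
      simp only [List.mem_cons, forall_eq_or_imp] at hw
      exact mul_mem (subset_closure ⟨x, hw.1, rfl⟩) (ih hw.2)

theorem of_phi_mul_of {x y : V} (h : y < x) :
    PresentedMonoid.of T.monRels (T.phi x y) * PresentedMonoid.of T.monRels x =
      PresentedMonoid.of T.monRels x * PresentedMonoid.of T.monRels y := by
  have := PresentedMonoid.mk_eq_mk_of_rel (rels := T.monRels)
    ⟨x, y, (T.adj_of_lt y x h).symm, rfl, rfl⟩
  rwa [T.phi_eq_self_of_not_lt (lt_asymm h)] at this

theorem isParabolicSet_of_isSpecial {N : Submonoid (TrickleMonoid T)} (hN : N.IsSpecial) :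
    T.IsParabolicSet {x | PresentedMonoid.of T.monRels x ∈ N} := by
  refine T.isParabolicSet_iff.2 fun x hx y => ?_
  by_cases hyx : y < x
  · have hx : PresentedMonoid.of T.monRels x ∈ N := hx
    simpa [hN.mul_mem_iff, hx] using congrArg (· ∈ N) (of_phi_mul_of T hyx)
  · rw [T.phi_eq_self_of_not_lt hyx]

theorem isSpecial_closure (hX : T.IsParabolicSet X) :
    (closure (PresentedMonoid.of T.monRels '' X)).IsSpecial := by
  intro a b hab
  obtain ⟨u, rfl⟩ := exists_ofWord_eq T a
  obtain ⟨v, rfl⟩ := exists_ofWord_eq T b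
  obtain ⟨w, hw, hwuv⟩ := (mem_closure_iff T).1 hab
  rw [← ofWord_append, ofWord_eq_ofWord_iff] at hwuv
  have huv := hX.forall_mem_of_wordEquiv hwuv hw
  simp only [List.mem_append, or_imp, forall_and] at huv
  exact ⟨(mem_closure_iff T).2 ⟨u, huv.1, rfl⟩, (mem_closure_iff T).2 ⟨v, huv.2, rfl⟩⟩

theorem exists_dvdL_mem_closure (hX : T.IsParabolicSet X) {a b d : TrickleMonoid T}
    (ha : a ∈ closure (PresentedMonoid.of T.monRels '' X))
    (hb : b ∈ closure (PresentedMonoid.of T.monRels '' X))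
    (had : DvdL a d) (hbd : DvdL b d) :
    ∃ e ∈ closure (PresentedMonoid.of T.monRels '' X), DvdL a e ∧ DvdL b e := by
  obtain ⟨u, hu, rfl⟩ := (mem_closure_iff T).1 ha
  obtain ⟨v, hv, rfl⟩ := (mem_closure_iff T).1 hb
  obtain ⟨⟨s₀, hs⟩, ⟨t₀, ht⟩⟩ := And.intro had hbd
  obtain ⟨s, rfl⟩ := exists_ofWord_eq T s₀
  obtain ⟨t, rfl⟩ := exists_ofWord_eq T t₀
  have hst := (ofWord_eq_ofWord_iff T (u := u ++ s) (v := v ++ t)).1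
    (by rw [ofWord_append, ofWord_append, hs, ht])
  obtain ⟨u₁, v₁, hu₁, -, -, -, huv, -⟩ :=
    exists_isLcmCompletion T.coherent_phi_inv (fun _ _ _ => hX.phi_inv_mem) hu hv ⟨s, t, hst⟩
  refine ⟨ofWord T (u ++ u₁), (mem_closure_iff T).2 ⟨_, ?_, rfl⟩,
    ⟨ofWord T u₁, (ofWord_append T u u₁).symm⟩, ⟨ofWord T v₁, ?_⟩⟩
  · simpa [or_imp, forall_and] using ⟨hu, hu₁⟩
  · rw [← ofWord_append, ofWord_eq_ofWord_iff]
    exact huv.symm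

theorem exists_dvdR_mem_closure (hX : T.IsParabolicSet X) {a b d : TrickleMonoid T}
    (ha : a ∈ closure (PresentedMonoid.of T.monRels '' X))
    (hb : b ∈ closure (PresentedMonoid.of T.monRels '' X))
    (had : DvdR a d) (hbd : DvdR b d) :
    ∃ e ∈ closure (PresentedMonoid.of T.monRels '' X), DvdR a e ∧ DvdR b e := by
  obtain ⟨u, hu, rfl⟩ := (mem_closure_iff T).1 ha
  obtain ⟨v, hv, rfl⟩ := (mem_closure_iff T).1 hb
  obtain ⟨⟨s₀, hs⟩, ⟨t₀, ht⟩⟩ := And.intro had hbd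
  obtain ⟨s, rfl⟩ := exists_ofWord_eq T s₀
  obtain ⟨t, rfl⟩ := exists_ofWord_eq T t₀
  have hst := (ofWord_eq_ofWord_iff_reverse T (u := s ++ u) (v := t ++ v)).1
    (by rw [ofWord_append, ofWord_append, hs, ht])
  rw [List.reverse_append, List.reverse_append] at hst
  obtain ⟨u₁, v₁, hu₁, -, -, -, huv, -⟩ :=
    exists_isLcmCompletion T.coherent_phi (fun _ _ _ => hX.phi_mem) (by simpa using hu)
      (by simpa using hv) ⟨_, _, hst⟩
  refine ⟨ofWord T (u₁.reverse ++ u), (mem_closure_iff T).2 ⟨_, ?_, rfl⟩,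
    ⟨ofWord T u₁.reverse, (ofWord_append T _ u).symm⟩, ⟨ofWord T v₁.reverse, ?_⟩⟩
  · simpa [or_imp, forall_and] using ⟨hu₁, hu⟩
  · rw [← ofWord_append, ofWord_eq_ofWord_iff_reverse]
    simpa using huv.symm

end TrickleMonoid

theorem TrickleMonoid.isParabolic_iff_general {V : Type u} [PartialOrder V] (T : TrickleGraph V)
    (N : Submonoid (TrickleMonoid T)) :
    N.IsParabolic ↔
      ∃ X : Set V, T.IsParabolicSet X ∧
        N = Submonoid.closure ((fun x : V => PresentedMonoid.of T.monRels x) '' X) := by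
  constructor
  · rintro ⟨hN, -, -⟩
    refine ⟨_, isParabolicSet_of_isSpecial T hN, ?_⟩
    convert hN.eq_closure_inter (PresentedMonoid.closure_range_of T.monRels) using 2
    exact Set.image_preimage_eq_range_inter
  · rintro ⟨X, hX, rfl⟩
    have hN := isSpecial_closure T hX
    refine ⟨hN, fun a b m ha hb hm => ?_, fun a b m ha hb hm => ?_⟩
    · obtain ⟨e, he, hae, hbe⟩ := exists_dvdL_mem_closure T hX ha hb hm.1.1 hm.1.2
      exact hN.mem_of_isLcmL hm hae hbe he
    · obtain ⟨e, he, hae, hbe⟩ := exists_dvdR_mem_closure T hX ha hb hm.1.1 hm.1.2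
      exact hN.mem_of_isLcmR hm hae hbe he

/-- **Proposition 7.8.** Let `Γ` be a preGarside trickle graph. A submonoid `N` of `Tr⁺(Γ)` is
a parabolic submonoid if and only if `N` is the submonoid generated by the vertices of some
parabolic subgraph `Γ₁` of `Γ` (equivalently, the image of `Tr⁺(Γ₁)` under the canonical
homomorphism `Tr⁺(Γ₁) → Tr⁺(Γ)`). -/
theorem TrickleMonoid.isParabolic_iff {V : Type u} [PartialOrder V] (T : TrickleGraph V)
    (hmu : ∀ x : V, T.mu x = ⊤) (N : Submonoid (TrickleMonoid T)) :
    N.IsParabolic ↔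
      ∃ X : Set V, T.IsParabolicSet X ∧
        N = Submonoid.closure ((fun x : V => PresentedMonoid.of T.monRels x) '' X) :=
  TrickleMonoid.isParabolic_iff_general T N
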